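/- arXiv:1502.03479 — 4 statements merged into one kernel-verified Lean document; each statement's English description precedes it below -/
import Mathlib

section
/- For every n ≥ 2 and every k with 1 ≤ k ≤ n, there exists a unique Lie algebra homomorphism d_k : L(P_n) → L(P_{n-1}) such that d_k(A_{i,j}) = A_{i,j} if i < j < k; d_k(A_{i,j}) = 0 if j = k; d_k(A_{i,j}) = A_{i,j-1} if i < k < j; d_k(A_{i,j}) = 0 if i = k; and d_k(A_{i,j}) = A_{i-1,j-1} if k < i < j. That is, the formula on generators of the free Lie algebra descends through the infinitesimal braid relations. -/
/-- Generating index set: pairs `(i, j)` with `1 ≤ i < j ≤ n` (1-indexed). -/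
abbrev PBGen (n : ℕ) : Type := {p : ℕ × ℕ // 0 < p.1 ∧ p.1 < p.2 ∧ p.2 ≤ n}

/-- The free Lie algebra over `ℤ` on the generators `A_{i,j}`, `1 ≤ i < j ≤ n`. -/
abbrev PBFree (n : ℕ) : Type := FreeLieAlgebra ℤ (PBGen n)

/-- The generator `A_{i,j}` of the free Lie algebra (junk value `0` out of range). -/
noncomputable def Agen (n i j : ℕ) : PBFree n :=
  if h : 0 < i ∧ i < j ∧ j ≤ n then FreeLieAlgebra.of ℤ (⟨(i, j), h⟩ : PBGen n) else 0

/-- The infinitesimal braid relations (horizontal 4T relations). -/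
def pbRels (n : ℕ) : Set (PBFree n) :=
  {x | (∃ i j s t : ℕ, (0 < i ∧ i < j ∧ j ≤ n) ∧ (0 < s ∧ s < t ∧ t ≤ n) ∧
          ({i, j} : Set ℕ) ∩ {s, t} = ∅ ∧ x = ⁅Agen n i j, Agen n s t⁆) ∨
       (∃ i j k : ℕ, 0 < i ∧ i < j ∧ j < k ∧ k ≤ n ∧
          x = ⁅Agen n i j, Agen n i k + Agen n j k⁆) ∨
       (∃ i j k : ℕ, 0 < i ∧ i < j ∧ j < k ∧ k ≤ n ∧
          x = ⁅Agen n i k, Agen n i j + Agen n j k⁆)}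

/-- The Lie ideal of the free Lie algebra generated by the infinitesimal braid relations. -/
noncomputable def pbIdeal (n : ℕ) : LieIdeal ℤ (PBFree n) :=
  LieSubmodule.lieSpan ℤ (PBFree n) (pbRels n)

/-- The Lie algebra `L(P_n)` of the pure braid group `P_n`. -/
abbrev LP (n : ℕ) : Type := PBFree n ⧸ pbIdeal n

/-- The image `A_{i,j}` in `L(P_n)` of the generator `a_{i,j}` (junk value `0` out of range). -/
noncomputable def A (n i j : ℕ) : LP n :=
  LieSubmodule.Quotient.mk (N := pbIdeal n) (Agen n i j)

/-!
Any index map `σ : ℕ → ℕ` that is strictly increasing on the indices it does not send to `0`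
induces a Lie algebra map `L(P_n) → L(P_m)`, `A_{i,j} ↦ A_{σ i, σ j}`: each relation of
`L(P_n)` goes either to a relation of `L(P_m)` or, when some index is sent to `0` or beyond
`m`, to a bracket involving the junk value `A m _ _ = 0`. Strand deletion is the renumbering
`i ↦ i` for `i < k`, `k ↦ 0`, `i ↦ i - 1` for `i > k`; it is unique because the `A_{i,j}`
generate `L(P_n)`.
-/

namespace LieIdeal

variable {R L L' : Type*} [CommRing R] [LieRing L] [LieAlgebra R L] [LieRing L'] [LieAlgebra R L']
  (I : LieIdeal R L)

def mkQ : L →ₗ⁅R⁆ L ⧸ I :=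
  { (I : Submodule R L).mkQ with map_lie' := rfl }

lemma mkQ_surjective : Function.Surjective I.mkQ :=
  Submodule.Quotient.mk_surjective _

def liftQ (f : L →ₗ⁅R⁆ L') (hf : I ≤ f.ker) : L ⧸ I →ₗ⁅R⁆ L' :=
  { (I : Submodule R L).liftQ (f : L →ₗ[R] L') hf with
    map_lie' := by
      intro x y
      obtain ⟨a, rfl⟩ := I.mkQ_surjective x
      obtain ⟨b, rfl⟩ := I.mkQ_surjective y
      exact f.map_lie a b }

@[simp]
lemma liftQ_mkQ (f : L →ₗ⁅R⁆ L') (hf : I ≤ f.ker) (x : L) :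
    I.liftQ f hf (I.mkQ x) = f x :=
  rfl

lemma hom_ext {f g : L ⧸ I →ₗ⁅R⁆ L'} (h : f.comp I.mkQ = g.comp I.mkQ) : f = g := by
  ext x
  obtain ⟨a, rfl⟩ := I.mkQ_surjective x
  exact LieHom.congr_fun h a

end LieIdeal

lemma A_eq_mkQ (m i j : ℕ) : A m i j = (pbIdeal m).mkQ (Agen m i j) := rfl

lemma A_eq_zero_of_out_of_range {m i j : ℕ} (h : ¬(0 < i ∧ i < j ∧ j ≤ m)) : A m i j = 0 := by
  rw [A_eq_mkQ, Agen, dif_neg h, map_zero]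

@[simp]
lemma A_zero_left (m j : ℕ) : A m 0 j = 0 := A_eq_zero_of_out_of_range (by omega)

@[simp]
lemma A_zero_right (m i : ℕ) : A m i 0 = 0 := A_eq_zero_of_out_of_range (by omega)

lemma LP.hom_ext {n : ℕ} {L : Type*} [LieRing L] [LieAlgebra ℤ L] {f g : LP n →ₗ⁅ℤ⁆ L}
    (h : ∀ i j, 0 < i → i < j → j ≤ n → f (A n i j) = g (A n i j)) : f = g :=
  (pbIdeal n).hom_ext <| FreeLieAlgebra.hom_ext fun ⟨(i, j), hp⟩ => by
    have := h i j hp.1 hp.2.1 hp.2.2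
    rwa [A_eq_mkQ, Agen, dif_pos hp] at this

lemma mkQ_eq_zero_of_mem_pbRels {m : ℕ} {x : PBFree m} (hx : x ∈ pbRels m) :
    (pbIdeal m).mkQ x = 0 :=
  (LieSubmodule.Quotient.mk_eq_zero' (N := pbIdeal m)).2 (LieSubmodule.subset_lieSpan hx)

lemma lie_A_A_eq_zero {m i j s t : ℕ} (hij : i < j) (hst : s < t) (his : i ≠ s) (hit : i ≠ t)
    (hjs : j ≠ s) (hjt : j ≠ t) : ⁅A m i j, A m s t⁆ = 0 := by
  by_cases hi : 0 < i ∧ j ≤ m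
  · by_cases hs : 0 < s ∧ t ≤ m
    · rw [A_eq_mkQ, A_eq_mkQ, ← LieHom.map_lie]
      refine mkQ_eq_zero_of_mem_pbRels (Or.inl ⟨i, j, s, t, by omega, by omega, ?_, rfl⟩)
      ext x
      simp only [Set.mem_inter_iff, Set.mem_insert_iff, Set.mem_singleton_iff,
        Set.mem_empty_iff_false, iff_false]
      omega
    · rw [A_eq_zero_of_out_of_range (i := s) (j := t) (by omega), lie_zero]
  · rw [A_eq_zero_of_out_of_range (i := i) (j := j) (by omega), zero_lie]

lemma lie_A_add_A_eq_zero {m i j l : ℕ} (hij : i < j) (hjl : j < l) :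
    ⁅A m i j, A m i l + A m j l⁆ = 0 := by
  obtain rfl | hi := i.eq_zero_or_pos
  · simp
  by_cases hl : l ≤ m
  · rw [A_eq_mkQ, A_eq_mkQ, A_eq_mkQ, ← map_add, ← LieHom.map_lie]
    exact mkQ_eq_zero_of_mem_pbRels (Or.inr (Or.inl ⟨i, j, l, hi, hij, hjl, hl, rfl⟩))
  · rw [A_eq_zero_of_out_of_range (i := i) (j := l) (by omega),
      A_eq_zero_of_out_of_range (i := j) (j := l) (by omega), add_zero, lie_zero]

lemma lie_A_add_A_eq_zero' {m i j l : ℕ} (hij : i < j) (hjl : j < l) :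
    ⁅A m i l, A m i j + A m j l⁆ = 0 := by
  obtain rfl | hi := i.eq_zero_or_pos
  · simp
  by_cases hl : l ≤ m
  · rw [A_eq_mkQ, A_eq_mkQ, A_eq_mkQ, ← map_add, ← LieHom.map_lie]
    exact mkQ_eq_zero_of_mem_pbRels (Or.inr (Or.inr ⟨i, j, l, hi, hij, hjl, hl, rfl⟩))
  · rw [A_eq_zero_of_out_of_range (i := i) (j := l) (by omega), zero_lie]

section Relabel

variable (σ : ℕ → ℕ) (n m : ℕ)

noncomputable def relabelFree : PBFree n →ₗ⁅ℤ⁆ LP m :=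
  FreeLieAlgebra.lift ℤ fun p => A m (σ p.1.1) (σ p.1.2)

variable {σ n m}

lemma relabelFree_Agen {i j : ℕ} (h : 0 < i ∧ i < j ∧ j ≤ n) :
    relabelFree σ n m (Agen n i j) = A m (σ i) (σ j) := by
  rw [Agen, dif_pos h]
  exact FreeLieAlgebra.lift_of_apply _ _

lemma pbIdeal_le_ker_relabelFree (hσ : StrictMonoOn σ {a | 0 < σ a}) :
    pbIdeal n ≤ (relabelFree σ n m).ker := by
  rw [pbIdeal, LieSubmodule.lieSpan_le]
  rintro x (⟨i, j, s, t, hij, hst, hd, rfl⟩ | ⟨i, j, l, hi, hij, hjl, hl, rfl⟩ |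
    ⟨i, j, l, hi, hij, hjl, hl, rfl⟩) <;>
    rw [SetLike.mem_coe, LieHom.mem_ker, LieHom.map_lie]
  · obtain ⟨his, hit, hjs, hjt⟩ : i ≠ s ∧ i ≠ t ∧ j ≠ s ∧ j ≠ t := by
      simp [Set.ext_iff] at hd
      omega
    rw [relabelFree_Agen hij, relabelFree_Agen hst]
    by_cases h : 0 < σ i ∧ 0 < σ j ∧ 0 < σ s ∧ 0 < σ t
    · obtain ⟨hi, hj, hs, ht⟩ := h
      exact lie_A_A_eq_zero (hσ hi hj hij.2.1) (hσ hs ht hst.2.1) (hσ.injOn.ne hi hs his)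
        (hσ.injOn.ne hi ht hit) (hσ.injOn.ne hj hs hjs) (hσ.injOn.ne hj ht hjt)
    · obtain h | h | h | h : σ i = 0 ∨ σ j = 0 ∨ σ s = 0 ∨ σ t = 0 := by omega
      all_goals simp [h]
  · rw [map_add, relabelFree_Agen ⟨hi, hij, by omega⟩, relabelFree_Agen ⟨hi, by omega, hl⟩,
      relabelFree_Agen ⟨by omega, hjl, hl⟩]
    by_cases h : 0 < σ i ∧ 0 < σ j ∧ 0 < σ l
    · exact lie_A_add_A_eq_zero (hσ h.1 h.2.1 hij) (hσ h.2.1 h.2.2 hjl)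
    · obtain h | h | h : σ i = 0 ∨ σ j = 0 ∨ σ l = 0 := by omega
      all_goals simp [h]
  · rw [map_add, relabelFree_Agen ⟨hi, hij, by omega⟩, relabelFree_Agen ⟨hi, by omega, hl⟩,
      relabelFree_Agen ⟨by omega, hjl, hl⟩]
    by_cases h : 0 < σ i ∧ 0 < σ j ∧ 0 < σ l
    · exact lie_A_add_A_eq_zero' (hσ h.1 h.2.1 hij) (hσ h.2.1 h.2.2 hjl)
    · obtain h | h | h : σ i = 0 ∨ σ j = 0 ∨ σ l = 0 := by omega
      all_goals simp [h]

noncomputable def relabel (hσ : StrictMonoOn σ {a | 0 < σ a}) (n m : ℕ) :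
    LP n →ₗ⁅ℤ⁆ LP m :=
  (pbIdeal n).liftQ (relabelFree σ n m) (pbIdeal_le_ker_relabelFree hσ)

lemma relabel_A (hσ : StrictMonoOn σ {a | 0 < σ a}) {i j : ℕ} (h : 0 < i ∧ i < j ∧ j ≤ n) :
    relabel hσ n m (A n i j) = A m (σ i) (σ j) :=
  ((pbIdeal n).liftQ_mkQ _ _ _).trans (relabelFree_Agen h)

end Relabel

def deleteIndex (k a : ℕ) : ℕ :=
  if a < k then a else if a = k then 0 else a - 1

lemma deleteIndex_of_lt {k a : ℕ} (h : a < k) : deleteIndex k a = a := if_pos h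

lemma deleteIndex_self (k : ℕ) : deleteIndex k k = 0 := by simp [deleteIndex]

lemma deleteIndex_of_gt {k a : ℕ} (h : k < a) : deleteIndex k a = a - 1 := by
  simp [deleteIndex, h.not_gt, h.ne']

lemma strictMonoOn_deleteIndex (k : ℕ) :
    StrictMonoOn (deleteIndex k) {a | 0 < deleteIndex k a} := by
  intro a (ha : 0 < deleteIndex k a) b (hb : 0 < deleteIndex k b) hab
  simp only [deleteIndex] at ha hb ⊢
  split_ifs at * <;> omega

noncomputable def strandDeletion (n k : ℕ) : LP n →ₗ⁅ℤ⁆ LP (n - 1) :=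
  relabel (strictMonoOn_deleteIndex k) n (n - 1)

lemma strandDeletion_A (n k : ℕ) :
    ∀ i j : ℕ, 0 < i → i < j → j ≤ n →
      (j < k → strandDeletion n k (A n i j) = A (n - 1) i j) ∧
      (j = k → strandDeletion n k (A n i j) = 0) ∧
      (i < k → k < j → strandDeletion n k (A n i j) = A (n - 1) i (j - 1)) ∧
      (i = k → strandDeletion n k (A n i j) = 0) ∧
      (k < i → strandDeletion n k (A n i j) = A (n - 1) (i - 1) (j - 1)) := by
  intro i j hi hij hjn
  rw [strandDeletion, relabel_A _ ⟨hi, hij, hjn⟩]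
  refine ⟨fun h => ?_, fun h => ?_, fun h h' => ?_, fun h => ?_, fun h => ?_⟩
  · rw [deleteIndex_of_lt (hij.trans h), deleteIndex_of_lt h]
  · rw [h, deleteIndex_self, A_zero_right]
  · rw [deleteIndex_of_lt h, deleteIndex_of_gt h']
  · rw [h, deleteIndex_self, A_zero_left]
  · rw [deleteIndex_of_gt h, deleteIndex_of_gt (h.trans hij)]

theorem exists_unique_strand_deletion_general (n : ℕ) (k : ℕ) :
    ∃! f : LP n →ₗ⁅ℤ⁆ LP (n - 1),
      ∀ i j : ℕ, 0 < i → i < j → j ≤ n →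
        (j < k → f (A n i j) = A (n - 1) i j) ∧
        (j = k → f (A n i j) = 0) ∧
        (i < k → k < j → f (A n i j) = A (n - 1) i (j - 1)) ∧
        (i = k → f (A n i j) = 0) ∧
        (k < i → f (A n i j) = A (n - 1) (i - 1) (j - 1)) := by
  refine ⟨strandDeletion n k, strandDeletion_A n k, fun g hg => LP.hom_ext ?_⟩
  intro i j hi hij hjn
  obtain ⟨g1, g2, g3, g4, g5⟩ := hg i j hi hij hjn
  obtain ⟨d1, d2, d3, d4, d5⟩ := strandDeletion_A n k i j hi hij hjn
  rcases lt_trichotomy j k with hj | hj | hj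
  · rw [g1 hj, d1 hj]
  · rw [g2 hj, d2 hj]
  rcases lt_trichotomy i k with hi | hi | hi
  · rw [g3 hi hj, d3 hi hj]
  · rw [g4 hi, d4 hi]
  · rw [g5 hi, d5 hi]

/-- For every `n ≥ 2` and every `k` with `1 ≤ k ≤ n`, there exists a unique
Lie algebra homomorphism `d_k : L(P_n) → L(P_{n-1})` such that `d_k (A_{i,j}) = A_{i,j}` if
`i < j < k`; `d_k (A_{i,j}) = 0` if `j = k`; `d_k (A_{i,j}) = A_{i,j-1}` if `i < k < j`;
`d_k (A_{i,j}) = 0` if `i = k`; and `d_k (A_{i,j}) = A_{i-1,j-1}` if `k < i < j`. -/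
theorem exists_unique_strand_deletion (n : ℕ) (hn : 2 ≤ n) (k : ℕ) (hk1 : 1 ≤ k)
    (hkn : k ≤ n) :
    ∃! f : LP n →ₗ⁅ℤ⁆ LP (n - 1),
      ∀ i j : ℕ, 0 < i → i < j → j ≤ n →
        (j < k → f (A n i j) = A (n - 1) i j) ∧
        (j = k → f (A n i j) = 0) ∧
        (i < k → k < j → f (A n i j) = A (n - 1) i (j - 1)) ∧
        (i = k → f (A n i j) = 0) ∧
        (k < i → f (A n i j) = A (n - 1) (i - 1) (j - 1)) :=
  exists_unique_strand_deletion_general n k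
end

section
/- Let X and Y be disjoint nonempty sets, let Z = X ∪ Y, and let π : L[Z] → L[Y] be the Lie algebra homomorphism over ℤ of free Lie algebras with π(x) = 0 for x ∈ X and π(y) = y for y ∈ Y. Then the kernel of π is a free Lie algebra freely generated by the elements x and [⋯[[x, y_1], y_2], …, y_t] for x ∈ X, y_1, …, y_t ∈ Y, t ≥ 1. More precisely, the canonical Lie algebra homomorphism from the free Lie algebra over ℤ on the index set of pairs (x, (y_1, …, y_t)) with x ∈ X, t ≥ 0, y_i ∈ Y, sending (x, (y_1, …, y_t)) to the left-normed bracket [⋯[[x, y_1], y_2], …, y_t] (equal to x when t = 0), is injective with image equal to Ker(π). -/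
/-- The left-normed bracket `[⋯[[x, y₁], y₂], …, y_t]` in a Lie ring,
given as a fold over the list `[y₁, …, y_t]` (equal to `x` when the list is empty). -/
def leftNormedBracket {L : Type*} [LieRing L] (x : L) (l : List L) : L :=
  l.foldl (fun a b => ⁅a, b⁆) x

/-! Lazard elimination. Let `φ : L[X × List Y] → L[X ⊕ Y]` send `(x, l)` to the left-normed
bracket of `x` with `l`. Appending a letter `y` to the words `(x, l)` extends to a derivation of
`L[X × List Y]`, so `L[Y]` acts on `L[X × List Y]` by derivations, and `φ` intertwines this action
with the adjoint action of `L[Y] ⊆ L[X ⊕ Y]`. Hence `(k, f) ↦ φ k + f` is a homomorphism from the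
semidirect sum `L[X × List Y] ⋊ L[Y]` to `L[X ⊕ Y]`, left inverse to the homomorphism
`x ↦ ((x, []), 0)`, `y ↦ (0, y)` given by freeness. The latter turns `φ` into the inclusion of the
first factor, so `φ` is injective, and turns `π` into the second coordinate, so every `a` with
`π a = 0` is `φ` of the first coordinate of its image. -/

section leftNormedBracket

variable {L L' : Type*} [LieRing L] [LieRing L']

@[simp]
lemma leftNormedBracket_nil (x : L) : leftNormedBracket x [] = x := rfl

@[simp]
lemma leftNormedBracket_cons (x z : L) (l : List L) :
    leftNormedBracket x (z :: l) = leftNormedBracket ⁅x, z⁆ l := rfl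

lemma leftNormedBracket_append_singleton (x z : L) (l : List L) :
    leftNormedBracket x (l ++ [z]) = ⁅leftNormedBracket x l, z⁆ := by
  simp [leftNormedBracket, List.foldl_append]

lemma leftNormedBracket_zero (l : List L) : leftNormedBracket (0 : L) l = 0 := by
  induction l with
  | nil => rfl
  | cons z l ih => simpa using ih

lemma LieHom.map_leftNormedBracket {R : Type*} [CommRing R] [LieAlgebra R L] [LieAlgebra R L']
    (f : L →ₗ⁅R⁆ L') (x : L) (l : List L) :
    f (leftNormedBracket x l) = leftNormedBracket (f x) (l.map f) := by
  induction l generalizing x with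
  | nil => rfl
  | cons z l ih => simpa using ih ⁅x, z⁆

end leftNormedBracket

namespace FreeLieAlgebra

variable {R X : Type*} [CommRing R]

theorem lieSpan_range_of :
    LieSubalgebra.lieSpan R (FreeLieAlgebra R X) (Set.range (of R)) = ⊤ := by
  set K := LieSubalgebra.lieSpan R (FreeLieAlgebra R X) (Set.range (of R))
  let j : FreeLieAlgebra R X →ₗ⁅R⁆ K :=
    lift R fun x => ⟨of R x, LieSubalgebra.subset_lieSpan ⟨x, rfl⟩⟩
  have hj : K.incl.comp j = LieHom.id := hom_ext fun x => by simp [j]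
  refine eq_top_iff.mpr fun a _ => ?_
  rw [← LieHom.id_apply (R := R) a, ← hj]
  exact (j a).2

@[elab_as_elim]
theorem induction_on {p : FreeLieAlgebra R X → Prop} (of : ∀ x, p (of R x)) (zero : p 0)
    (add : ∀ a b, p a → p b → p (a + b)) (smul : ∀ (t : R) a, p a → p (t • a))
    (lie : ∀ a b, p a → p b → p ⁅a, b⁆) (a : FreeLieAlgebra R X) : p a := by
  have ha : a ∈ LieSubalgebra.lieSpan R _ (Set.range (FreeLieAlgebra.of R)) :=
    lieSpan_range_of (R := R) (X := X) ▸ trivial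
  induction ha using LieSubalgebra.lieSpan_induction with
  | mem _ hx => obtain ⟨x, rfl⟩ := hx; exact of x
  | zero => exact zero
  | add a b _ _ ha hb => exact add a b ha hb
  | smul t a _ ha => exact smul t a ha
  | lie a b _ _ ha hb => exact lie a b ha hb

end FreeLieAlgebra

noncomputable section

def TrivialLieAlgebra (M : Type*) := M

namespace TrivialLieAlgebra

variable {R M : Type*} [CommRing R] [AddCommGroup M] [Module R M]

instance : AddCommGroup (TrivialLieAlgebra M) := inferInstanceAs (AddCommGroup M)

instance : Module R (TrivialLieAlgebra M) := inferInstanceAs (Module R M)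

instance : LieRing (TrivialLieAlgebra M) where
  bracket _ _ := 0
  add_lie _ _ _ := (add_zero 0).symm
  lie_add _ _ _ := (add_zero 0).symm
  lie_self _ := rfl
  leibniz_lie _ _ _ := (add_zero 0).symm

@[simp]
lemma lie_eq_zero (a b : TrivialLieAlgebra M) : ⁅a, b⁆ = 0 := rfl

instance : LieAlgebra R (TrivialLieAlgebra M) where
  lie_smul _ _ _ := (smul_zero _).symm

end TrivialLieAlgebra

section toTrivialLieAlgebraDerivation

variable (R L M : Type*) [CommRing R] [LieRing L] [LieAlgebra R L] [AddCommGroup M] [Module R M]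
  [LieRingModule L M] [LieModule R L M]

def LieModule.toTrivialLieAlgebraDerivation :
    L →ₗ⁅R⁆ LieDerivation R (TrivialLieAlgebra M) (TrivialLieAlgebra M) where
  toFun l :=
    { toLinearMap := LieModule.toEnd R L M l
      leibniz' _ _ := show LieModule.toEnd R L M l (0 : M) = 0 - 0 by simp }
  map_add' x y := by ext m; exact add_lie x y (show M from m)
  map_smul' t x := by ext m; exact smul_lie t x (show M from m)
  map_lie' {x y} := by ext m; exact lie_lie x y (show M from m)

end toTrivialLieAlgebraDerivation

namespace FreeLieAlgebra

open LieAlgebra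

variable {R X M : Type*} [CommRing R] [AddCommGroup M] [Module R M]
  [LieRingModule (FreeLieAlgebra R X) M] [LieModule R (FreeLieAlgebra R X) M]

-- A derivation `D` into `M` is the first coordinate of the homomorphism `a ↦ (D a, a)`.
variable (R) in
def graphHom (v : X → M) : FreeLieAlgebra R X →ₗ⁅R⁆ TrivialLieAlgebra M
    ⋊⁅LieModule.toTrivialLieAlgebraDerivation R (FreeLieAlgebra R X) M⁆ FreeLieAlgebra R X :=
  lift R fun x => ⟨v x, of R x⟩

lemma graphHom_right (v : X → M) (a : FreeLieAlgebra R X) : (graphHom R v a).right = a := by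
  have : (SemiDirectSum.projr _).comp (graphHom R v) = LieHom.id :=
    hom_ext fun x => by simp [graphHom]
  exact LieHom.congr_fun this a

variable (R) in
def liftDerivation (v : X → M) : LieDerivation R (FreeLieAlgebra R X) M where
  toFun a := show M from (graphHom R v a).left
  map_add' a b := congrArg SemiDirectSum.left (map_add (graphHom R v) a b)
  map_smul' t a := congrArg SemiDirectSum.left (map_smul (graphHom R v) t a)
  leibniz' a b := by
    show (graphHom R v ⁅a, b⁆).left = _
    simp only [LieHom.map_lie, SemiDirectSum.lie_eq_mk, graphHom_right,
      TrivialLieAlgebra.lie_eq_zero, zero_add]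
    rfl

@[simp]
lemma liftDerivation_of (v : X → M) (x : X) : liftDerivation R v (of R x) = v x :=
  congrArg (β := TrivialLieAlgebra M) SemiDirectSum.left (lift_of_apply _ x)

end FreeLieAlgebra

namespace LieAlgebra.SemiDirectSum

variable {R K L M : Type*} [CommRing R] [LieRing K] [LieAlgebra R K] [LieRing L] [LieAlgebra R L]
  [LieRing M] [LieAlgebra R M] {ψ : L →ₗ⁅R⁆ LieDerivation R K K}

def lift (f : K →ₗ⁅R⁆ M) (g : L →ₗ⁅R⁆ M) (h : ∀ l k, f (ψ l k) = ⁅g l, f k⁆) :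
    K ⋊⁅ψ⁆ L →ₗ⁅R⁆ M where
  toFun x := f x.left + g x.right
  map_add' x y := by simp only [add_eq_mk, map_add]; abel
  map_smul' t x := by simp
  map_lie' {x y} := by
    simp only [lie_eq_mk, map_sub, map_add, LieHom.map_lie, h, lie_add, add_lie]
    rw [← lie_skew (g y.right)]
    abel

@[simp]
lemma lift_apply (f : K →ₗ⁅R⁆ M) (g : L →ₗ⁅R⁆ M) (h : ∀ l k, f (ψ l k) = ⁅g l, f k⁆)
    (x : K ⋊⁅ψ⁆ L) : lift f g h x = f x.left + g x.right := rfl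

end LieAlgebra.SemiDirectSum

namespace LazardElimination

open FreeLieAlgebra LieAlgebra

variable (R X Y : Type*) [CommRing R]

def bracketHom : FreeLieAlgebra R (X × List Y) →ₗ⁅R⁆ FreeLieAlgebra R (X ⊕ Y) :=
  lift R fun p => leftNormedBracket (of R (Sum.inl p.1)) (p.2.map fun y => of R (Sum.inr y))

def projRight : FreeLieAlgebra R (X ⊕ Y) →ₗ⁅R⁆ FreeLieAlgebra R Y :=
  lift R (Sum.elim (fun _ : X => (0 : FreeLieAlgebra R Y)) (fun y : Y => of R y))

def inclRight : FreeLieAlgebra R Y →ₗ⁅R⁆ FreeLieAlgebra R (X ⊕ Y) :=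
  lift R fun y => of R (Sum.inr y)

-- The sign: `ψ l` acts as `⁅l, -⁆` in a semidirect sum, while appending `y` is `⁅-, y⁆`.
def appendDerivation (y : Y) :
    LieDerivation R (FreeLieAlgebra R (X × List Y)) (FreeLieAlgebra R (X × List Y)) :=
  liftDerivation R fun p => -of R (p.1, p.2 ++ [y])

def appendAction :
    FreeLieAlgebra R Y →ₗ⁅R⁆
      LieDerivation R (FreeLieAlgebra R (X × List Y)) (FreeLieAlgebra R (X × List Y)) :=
  lift R (appendDerivation R X Y)

abbrev SemiDirect := FreeLieAlgebra R (X × List Y) ⋊⁅appendAction R X Y⁆ FreeLieAlgebra R Y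

def toSemiDirect : FreeLieAlgebra R (X ⊕ Y) →ₗ⁅R⁆ SemiDirect R X Y :=
  lift R (Sum.elim (fun x => ⟨of R (x, []), 0⟩) (fun y => ⟨0, of R y⟩))

variable {R X Y}

lemma lie_semiDirect_of_of (x : X) (l : List Y) (y : Y) :
    ⁅(⟨of R (x, l), 0⟩ : SemiDirect R X Y), ⟨0, of R y⟩⁆ =
      (⟨of R (x, l ++ [y]), 0⟩ : SemiDirect R X Y) := by
  rw [SemiDirectSum.lie_eq_mk]
  simp [appendAction, appendDerivation]

lemma leftNormedBracket_semiDirect (x : X) (acc l : List Y) :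
    leftNormedBracket (⟨of R (x, acc), 0⟩ : SemiDirect R X Y) (l.map fun y => ⟨0, of R y⟩) =
      ⟨of R (x, acc ++ l), 0⟩ := by
  induction l generalizing acc with
  | nil => simp
  | cons y l ih =>
    rw [List.map_cons, leftNormedBracket_cons, lie_semiDirect_of_of, ih]
    simp

lemma toSemiDirect_comp_bracketHom :
    (toSemiDirect R X Y).comp (bracketHom R X Y) = SemiDirectSum.inl _ := by
  refine hom_ext fun ⟨x, l⟩ => ?_
  simp [bracketHom, LieHom.map_leftNormedBracket, toSemiDirect, Function.comp_def,
    leftNormedBracket_semiDirect]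

lemma bracketHom_injective : Function.Injective (bracketHom R X Y) := by
  have h := SemiDirectSum.inl_injective (appendAction R X Y)
  rw [← toSemiDirect_comp_bracketHom, LieHom.coe_comp] at h
  exact h.of_comp

lemma projRight_comp_bracketHom : (projRight R X Y).comp (bracketHom R X Y) = 0 :=
  hom_ext fun p => by
    simp [bracketHom, projRight, LieHom.map_leftNormedBracket, leftNormedBracket_zero]

lemma bracketHom_appendDerivation (y : Y) (k : FreeLieAlgebra R (X × List Y)) :
    bracketHom R X Y (appendDerivation R X Y y k) =
      ⁅of R (Sum.inr y : X ⊕ Y), bracketHom R X Y k⁆ := by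
  induction k using FreeLieAlgebra.induction_on with
  | of p => simp [appendDerivation, bracketHom, leftNormedBracket_append_singleton]
  | zero => simp
  | add a b ha hb => rw [map_add, map_add, map_add, ha, hb, lie_add]
  | smul t a ha => rw [map_smul, map_smul, map_smul, ha, lie_smul]
  | lie a b ha hb =>
    rw [LieDerivation.apply_lie_eq_add, map_add, LieHom.map_lie, LieHom.map_lie,
      LieHom.map_lie, ha, hb, leibniz_lie (of R (Sum.inr y))]
    abel

lemma bracketHom_appendAction (f : FreeLieAlgebra R Y) (k : FreeLieAlgebra R (X × List Y)) :
    bracketHom R X Y (appendAction R X Y f k) = ⁅inclRight R X Y f, bracketHom R X Y k⁆ := by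
  induction f using FreeLieAlgebra.induction_on generalizing k with
  | of y => simpa [appendAction, inclRight] using bracketHom_appendDerivation y k
  | zero => simp
  | add a b ha hb => rw [map_add, LieDerivation.add_apply, map_add, ha, hb, map_add, add_lie]
  | smul t a ha => rw [map_smul, LieDerivation.smul_apply, map_smul, ha, map_smul, smul_lie]
  | lie a b ha hb =>
    simp only [LieHom.map_lie, LieDerivation.lie_apply, map_sub, ha, hb, lie_lie]

variable (R X Y) in
def ofSemiDirect : SemiDirect R X Y →ₗ⁅R⁆ FreeLieAlgebra R (X ⊕ Y) :=
  SemiDirectSum.lift (bracketHom R X Y) (inclRight R X Y) bracketHom_appendAction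

lemma ofSemiDirect_comp_toSemiDirect :
    (ofSemiDirect R X Y).comp (toSemiDirect R X Y) = .id :=
  hom_ext fun z => by
    cases z <;> simp [ofSemiDirect, toSemiDirect, bracketHom, inclRight]

lemma projr_comp_toSemiDirect :
    (SemiDirectSum.projr _).comp (toSemiDirect R X Y) = projRight R X Y :=
  hom_ext fun z => by cases z <;> simp [toSemiDirect, projRight]

lemma range_bracketHom :
    Set.range (bracketHom R X Y) = {a | projRight R X Y a = 0} := by
  refine Set.Subset.antisymm ?_ fun a ha => ⟨(toSemiDirect R X Y a).left, ?_⟩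
  · rintro _ ⟨k, rfl⟩
    exact LieHom.congr_fun projRight_comp_bracketHom k
  · have hright : (toSemiDirect R X Y a).right = 0 :=
      (LieHom.congr_fun projr_comp_toSemiDirect a).trans ha
    simpa [ofSemiDirect, hright] using LieHom.congr_fun ofSemiDirect_comp_toSemiDirect a

end LazardElimination

end

theorem ker_free_lie_projection_free_general (X Y : Type*) :
    Function.Injective
      (FreeLieAlgebra.lift ℤ (fun p : X × List Y =>
        leftNormedBracket (FreeLieAlgebra.of ℤ (Sum.inl p.1 : X ⊕ Y))
          (p.2.map (fun y => FreeLieAlgebra.of ℤ (Sum.inr y : X ⊕ Y))))) ∧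
    Set.range
      (FreeLieAlgebra.lift ℤ (fun p : X × List Y =>
        leftNormedBracket (FreeLieAlgebra.of ℤ (Sum.inl p.1 : X ⊕ Y))
          (p.2.map (fun y => FreeLieAlgebra.of ℤ (Sum.inr y : X ⊕ Y))))) =
      {a : FreeLieAlgebra ℤ (X ⊕ Y) |
        FreeLieAlgebra.lift ℤ
          (Sum.elim (fun _ : X => (0 : FreeLieAlgebra ℤ Y))
            (fun y : Y => FreeLieAlgebra.of ℤ y)) a = 0} :=
  ⟨LazardElimination.bracketHom_injective, LazardElimination.range_bracketHom⟩

/-- **Statement 3.** Let `X` and `Y` be disjoint nonempty sets (modelled by the sum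
type `X ⊕ Y`), and let `π : L[X ⊕ Y] → L[Y]` be the Lie algebra homomorphism over `ℤ`
with `π x = 0` for `x ∈ X` and `π y = y` for `y ∈ Y`.  Then `Ker π` is a free Lie
algebra freely generated by the elements `x` and `[⋯[[x, y₁], y₂], …, y_t]` for `x ∈ X`,
`y₁, …, y_t ∈ Y`, `t ≥ 1`: the canonical Lie algebra homomorphism from the free Lie
algebra over `ℤ` on the index set of pairs `(x, (y₁, …, y_t))` (with `t ≥ 0`) sending
`(x, (y₁, …, y_t))` to the left-normed bracket `[⋯[[x, y₁], y₂], …, y_t]` is injective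
with image equal to `Ker π`. -/
theorem ker_free_lie_projection_free (X Y : Type*) [Nonempty X] [Nonempty Y] :
    Function.Injective
      (FreeLieAlgebra.lift ℤ (fun p : X × List Y =>
        leftNormedBracket (FreeLieAlgebra.of ℤ (Sum.inl p.1 : X ⊕ Y))
          (p.2.map (fun y => FreeLieAlgebra.of ℤ (Sum.inr y : X ⊕ Y))))) ∧
    Set.range
      (FreeLieAlgebra.lift ℤ (fun p : X × List Y =>
        leftNormedBracket (FreeLieAlgebra.of ℤ (Sum.inl p.1 : X ⊕ Y))
          (p.2.map (fun y => FreeLieAlgebra.of ℤ (Sum.inr y : X ⊕ Y))))) =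
      {a : FreeLieAlgebra ℤ (X ⊕ Y) |
        FreeLieAlgebra.lift ℤ
          (Sum.elim (fun _ : X => (0 : FreeLieAlgebra ℤ Y))
            (fun y : Y => FreeLieAlgebra.of ℤ y)) a = 0} :=
  ker_free_lie_projection_free_general X Y
end

section
/- Let L be a Lie algebra over a commutative ring and let I_1, …, I_n be Lie ideals of L. Let a_j ∈ I_j for 1 ≤ j ≤ n. Then for every permutation σ of {1, …, n} and every bracket arrangement β^n of weight n, the element β^n(a_{σ(1)}, …, a_{σ(n)}) lies in the symmetric bracket sum [[I_1, I_2], …, I_n]_S. -/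
/-- Bracket arrangements of weight `t`: `β¹(a₁) = a₁` and every bracket arrangement of
weight `t ≥ 2` has the form `βᵗ(a₁, …, a_t) = [βᵖ(a₁, …, a_p), β^{t-p}(a_{p+1}, …, a_t)]`. -/
inductive BracketArr : ℕ → Type
  | leaf : BracketArr 1
  | node {p q : ℕ} : BracketArr p → BracketArr q → BracketArr (p + q)

/-- Evaluation of a bracket arrangement of weight `t` on a `t`-tuple of elements
of a Lie ring. -/
def BracketArr.eval {L : Type*} [LieRing L] : ∀ {t : ℕ}, BracketArr t → (Fin t → L) → L
  | _, .leaf, a => a 0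
  | _, .node u v, a =>
      ⁅u.eval (fun i => a (Fin.castAdd _ i)), v.eval (fun i => a (Fin.natAdd _ i))⁆

/-- The left-normed bracket of a list of Lie ideals,
`[[⋯[[I₁, I₂], I₃], …], I_m]` (with junk value `⊥` for the empty list). -/
def lnbIdeal {R : Type*} [CommRing R] {L : Type*} [LieRing L] [LieAlgebra R L] :
    List (LieIdeal R L) → LieIdeal R L
  | [] => ⊥
  | I :: Is => Is.foldl (fun acc J => ⁅acc, J⁆) I

/-- The symmetric bracket sum `[[I₁, I₂], …, I_n]_S = Σ_{σ ∈ Σ_n}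
[[I_{σ(1)}, I_{σ(2)}], …, I_{σ(n)}]` of a family of Lie ideals. -/
def symBracketSum {R : Type*} [CommRing R] {L : Type*} [LieRing L] [LieAlgebra R L]
    {n : ℕ} (I : Fin n → LieIdeal R L) : LieIdeal R L :=
  ⨆ σ : Equiv.Perm (Fin n), lnbIdeal (List.ofFn (fun s => I (σ s)))

/-- The fat bracket sum `[[I₁, I₂, …, I_n]]`: the Lie ideal generated by all elements
`βᵗ(a_{i₁}, …, a_{i_t})`, where `t ≥ n`, `βᵗ` is a bracket arrangement of weight `t`,
every integer in `{1, …, n}` occurs among the indices `i₁, …, i_t`, and `a_{i_s} ∈ I_{i_s}`. -/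
def fatBracketSum {R : Type*} [CommRing R] {L : Type*} [LieRing L] [LieAlgebra R L]
    {n : ℕ} (I : Fin n → LieIdeal R L) : LieIdeal R L :=
  LieSubmodule.lieSpan R L
    {x : L | ∃ t : ℕ, n ≤ t ∧ ∃ β : BracketArr t, ∃ idx : Fin t → Fin n,
      Function.Surjective idx ∧ ∃ a : Fin t → L,
        (∀ s : Fin t, a s ∈ I (idx s)) ∧ x = β.eval a}

/-! For a list `M` of ideals let `S(M)` be the sum of the left-normed brackets of all
rearrangements of `M`. The Jacobi identity gives `[X, [Y, J]] ⊆ [[X, Y], J] + [[X, J], Y]` for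
ideals, and with it induction on the length of `B` shows `[lnb A, lnb B] ⊆ S(A ++ B)`; hence
`[S(M), S(N)] ⊆ S(M ++ N)`. Induction on the bracket arrangement then puts
`β(a_{σ(1)}, …, a_{σ(n)})` into `S([I_{σ(1)}, …, I_{σ(n)}]) = S([I_1, …, I_n])`, which is the
symmetric bracket sum. -/

theorem List.Perm.exists_finEquiv_getElem {α : Type*} {l₁ l₂ : List α} (h : l₁.Perm l₂) :
    ∃ e : Fin l₂.length ≃ Fin l₁.length, ∀ i : Fin l₂.length, l₂[i] = l₁[e i] := by
  induction h with
  | nil => exact ⟨Equiv.refl _, fun i => i.elim0⟩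
  | cons x _ ih =>
    obtain ⟨e, he⟩ := ih
    refine ⟨(finSuccEquiv _).trans (e.optionCongr.trans (finSuccEquiv _).symm), fun i => ?_⟩
    cases i using Fin.cases
    · simp
    · simpa using he _
  | swap x y l =>
    refine ⟨Equiv.swap 0 1, fun i => ?_⟩
    rcases i with ⟨_ | _ | i, hi⟩ <;> simp [Equiv.swap_apply_of_ne_of_ne]
  | trans _ _ ih₁ ih₂ =>
    obtain ⟨e₁, he₁⟩ := ih₁
    obtain ⟨e₂, he₂⟩ := ih₂
    exact ⟨e₂.trans e₁, fun i => (he₂ i).trans (he₁ _)⟩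

theorem List.Perm.exists_eq_ofFn_comp {α : Type*} {n : ℕ} {f : Fin n → α} {l : List α}
    (h : (List.ofFn f).Perm l) : ∃ σ : Equiv.Perm (Fin n), l = List.ofFn (f ∘ σ) := by
  obtain ⟨e, he⟩ := h.exists_finEquiv_getElem
  have hl : n = l.length := by simp [← h.length_eq]
  refine ⟨(finCongr hl).trans (e.trans (finCongr List.length_ofFn)),
    List.ext_getElem (by simp [hl]) fun i hi _ => ?_⟩
  refine (he ⟨i, hi⟩).trans ?_
  simp [Fin.cast]

namespace LieSubmodule

variable {R L M : Type*} [CommRing R] [LieRing L] [LieAlgebra R L] [AddCommGroup M] [Module R M]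
  [LieRingModule L M]

theorem iSup_lie_le {ι : Type*} {I : ι → LieIdeal R L} {N N' : LieSubmodule R L M}
    (h : ∀ i, ⁅I i, N⁆ ≤ N') : ⁅⨆ i, I i, N⁆ ≤ N' := by
  rw [lie_le_iff]
  intro x hx m hm
  refine iSup_induction I (motive := fun y => ⁅y, m⁆ ∈ N') hx
    (fun i y hy => h i (lie_mem_lie hy hm)) (by simp) fun y z hy hz => ?_
  rw [add_lie]
  exact add_mem hy hz

theorem lie_iSup_le {ι : Type*} {I : LieIdeal R L} {N : ι → LieSubmodule R L M}
    {N' : LieSubmodule R L M} (h : ∀ i, ⁅I, N i⁆ ≤ N') : ⁅I, ⨆ i, N i⁆ ≤ N' := by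
  rw [lie_le_iff]
  intro x hx m hm
  refine iSup_induction N (motive := fun n => ⁅x, n⁆ ∈ N') hm
    (fun i n hn => h i (lie_mem_lie hx hn)) (by simp) fun n n' hn hn' => ?_
  rw [lie_add]
  exact add_mem hn hn'

theorem lie_lie_le_sup [LieModule R L M] (I J : LieIdeal R L) (N : LieSubmodule R L M) :
    ⁅I, ⁅J, N⁆⁆ ≤ ⁅⁅I, J⁆, N⁆ ⊔ ⁅J, ⁅I, N⁆⁆ := by
  rw [lie_le_iff]
  intro x hx m hm
  rw [← mem_toSubmodule, lieIdeal_oper_eq_linear_span'] at hm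
  induction hm using Submodule.span_induction with
  | mem _ hm =>
    obtain ⟨y, hy, n, hn, rfl⟩ := hm
    rw [leibniz_lie x y n]
    exact add_mem (mem_sup_left (lie_mem_lie (lie_mem_lie hx hy) hn))
      (mem_sup_right (lie_mem_lie hy (lie_mem_lie hx hn)))
  | zero => simp
  | add m n _ _ hm hn => rw [lie_add]; exact add_mem hm hn
  | smul t m _ hm => rw [lie_smul]; exact SMulMemClass.smul_mem t hm

end LieSubmodule

section SymLnbIdeal

open LieSubmodule

variable {R L : Type*} [CommRing R] [LieRing L] [LieAlgebra R L]

theorem lnbIdeal_cons_append_singleton (I J : LieIdeal R L) (A : List (LieIdeal R L)) :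
    lnbIdeal (I :: A ++ [J]) = ⁅lnbIdeal (I :: A), J⁆ := by
  simp [lnbIdeal]

theorem lie_lnbIdeal_le_lnbIdeal_append_singleton (A : List (LieIdeal R L)) (J : LieIdeal R L) :
    ⁅lnbIdeal A, J⁆ ≤ lnbIdeal (A ++ [J]) := by
  cases A with
  | nil => simp [lnbIdeal]
  | cons I A => exact (lnbIdeal_cons_append_singleton I J A).ge

/-- The `S(M)` of the header: indexing by rearrangements of the list rather than by
`Equiv.Perm (Fin n)` makes concatenation easy to handle. -/
def symLnbIdeal (M : List (LieIdeal R L)) : LieIdeal R L :=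
  ⨆ l : {l : List (LieIdeal R L) // M.Perm l}, lnbIdeal l.1

theorem lnbIdeal_le_symLnbIdeal {M l : List (LieIdeal R L)} (h : M.Perm l) :
    lnbIdeal l ≤ symLnbIdeal M :=
  le_iSup (fun l : {l // M.Perm l} => lnbIdeal l.1) ⟨l, h⟩

theorem symLnbIdeal_le {M : List (LieIdeal R L)} {C : LieIdeal R L}
    (h : ∀ l, M.Perm l → lnbIdeal l ≤ C) : symLnbIdeal M ≤ C :=
  iSup_le fun l => h l.1 l.2

theorem symLnbIdeal_eq_of_perm {M N : List (LieIdeal R L)} (h : M.Perm N) :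
    symLnbIdeal M = symLnbIdeal N :=
  le_antisymm (symLnbIdeal_le fun _ hl => lnbIdeal_le_symLnbIdeal (h.symm.trans hl))
    (symLnbIdeal_le fun _ hl => lnbIdeal_le_symLnbIdeal (h.trans hl))

theorem symLnbIdeal_lie_le (M : List (LieIdeal R L)) (J : LieIdeal R L) :
    ⁅symLnbIdeal M, J⁆ ≤ symLnbIdeal (M ++ [J]) :=
  iSup_lie_le fun l => (lie_lnbIdeal_le_lnbIdeal_append_singleton l.1 J).trans
    (lnbIdeal_le_symLnbIdeal (l.2.append_right [J]))

theorem lie_lnbIdeal_le_symLnbIdeal (A B : List (LieIdeal R L)) :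
    ⁅lnbIdeal A, lnbIdeal B⁆ ≤ symLnbIdeal (A ++ B) := by
  induction B using List.reverseRecOn generalizing A with
  | nil => simp [lnbIdeal]
  | append_singleton B J ih =>
    cases B with
    | nil =>
      rw [List.nil_append]
      exact (lie_lnbIdeal_le_lnbIdeal_append_singleton A J).trans
        (lnbIdeal_le_symLnbIdeal (List.Perm.refl _))
    | cons I B =>
      rw [lnbIdeal_cons_append_singleton]
      refine (lie_lie_le_sup _ _ _).trans (sup_le ?_ ?_)
      · calc ⁅⁅lnbIdeal A, lnbIdeal (I :: B)⁆, J⁆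
            ≤ ⁅symLnbIdeal (A ++ I :: B), J⁆ := mono_lie_left _ (ih A)
          _ ≤ symLnbIdeal (A ++ I :: B ++ [J]) := symLnbIdeal_lie_le _ J
          _ = symLnbIdeal (A ++ (I :: B ++ [J])) := by rw [List.append_assoc]
      · calc ⁅lnbIdeal (I :: B), ⁅lnbIdeal A, J⁆⁆
            = ⁅⁅lnbIdeal A, J⁆, lnbIdeal (I :: B)⁆ := lie_comm _ _
          _ ≤ ⁅lnbIdeal (A ++ [J]), lnbIdeal (I :: B)⁆ :=
            mono_lie_left _ (lie_lnbIdeal_le_lnbIdeal_append_singleton A J)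
          _ ≤ symLnbIdeal (A ++ [J] ++ I :: B) := ih _
          _ = symLnbIdeal (A ++ (I :: B ++ [J])) := by
            rw [List.append_assoc]
            exact symLnbIdeal_eq_of_perm (List.perm_append_comm.append_left A)

theorem lie_symLnbIdeal_le (M N : List (LieIdeal R L)) :
    ⁅symLnbIdeal M, symLnbIdeal N⁆ ≤ symLnbIdeal (M ++ N) :=
  iSup_lie_le fun l => lie_iSup_le fun l' => (lie_lnbIdeal_le_symLnbIdeal l.1 l'.1).trans
    (symLnbIdeal_eq_of_perm (l.2.append l'.2)).ge

theorem BracketArr.eval_mem_symLnbIdeal {t : ℕ} (β : BracketArr t) {K : Fin t → LieIdeal R L}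
    {a : Fin t → L} (ha : ∀ s, a s ∈ K s) : β.eval a ∈ symLnbIdeal (List.ofFn K) := by
  induction β with
  | leaf =>
    rw [List.ofFn_succ, List.ofFn_zero]
    exact lnbIdeal_le_symLnbIdeal (List.Perm.refl _) (ha 0)
  | node u v ihu ihv =>
    rw [List.ofFn_add]
    exact lie_symLnbIdeal_le _ _ (lie_mem_lie (ihu fun s => ha _) (ihv fun s => ha _))

theorem symLnbIdeal_ofFn_le_symBracketSum {n : ℕ} (I : Fin n → LieIdeal R L) :
    symLnbIdeal (List.ofFn I) ≤ symBracketSum I :=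
  symLnbIdeal_le fun l hl => by
    obtain ⟨σ, rfl⟩ := hl.exists_eq_ofFn_comp
    exact le_iSup (fun σ : Equiv.Perm (Fin n) => lnbIdeal (List.ofFn fun s => I (σ s))) σ

end SymLnbIdeal

/-- **Statement 8.** Let `L` be a Lie algebra over a commutative ring and `I₁, …, I_n` Lie
ideals of `L`, and let `a_j ∈ I_j`.  Then for every permutation `σ` of `{1, …, n}` and every
bracket arrangement `βⁿ` of weight `n`, the element `βⁿ(a_{σ(1)}, …, a_{σ(n)})` lies in the
symmetric bracket sum `[[I₁, I₂], …, I_n]_S`. -/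
theorem bracketArr_perm_mem_symBracketSum {R : Type*} [CommRing R] {L : Type*} [LieRing L]
    [LieAlgebra R L] {n : ℕ} (I : Fin n → LieIdeal R L) (a : Fin n → L)
    (ha : ∀ j, a j ∈ I j) (σ : Equiv.Perm (Fin n)) (β : BracketArr n) :
    β.eval (fun s => a (σ s)) ∈ symBracketSum I := by
  have hβ := β.eval_mem_symLnbIdeal (K := I ∘ σ) fun s => ha (σ s)
  rw [symLnbIdeal_eq_of_perm (σ.ofFn_comp_perm I)] at hβ
  exact symLnbIdeal_ofFn_le_symBracketSum I hβ
end

section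
/- Let L be a Lie algebra over a commutative ring and let I_1, …, I_n be Lie ideals of L. Let (i_1, i_2, …, i_p) be a sequence of integers with 1 ≤ i_s ≤ n such that {i_1, i_2, …, i_p} = {1, 2, …, n} (every index from 1 to n occurs). Then the left-normed bracket of ideals satisfies [[I_{i_1}, I_{i_2}], …, I_{i_p}] ≤ [[I_1, I_2], …, I_n]_S. -/
/-!
Since `⁅A, B⁆ ≤ A ⊓ B` and the bracket of ideals is monotone, deleting entries from a list of
ideals can only enlarge its left-normed bracket (as long as the list stays nonempty). Deleting
repetitions from `(I_{i₁}, …, I_{i_p})` leaves `(I_{σ(1)}, …, I_{σ(n)})` for a permutation `σ`,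
whose left-normed bracket is a summand of the symmetric bracket sum.
-/

section LeftNormedBracket

variable {R : Type*} [CommRing R] {L : Type*} [LieRing L] [LieAlgebra R L]

theorem lnbIdeal_cons_mono {A B : LieIdeal R L} (h : A ≤ B) (l : List (LieIdeal R L)) :
    lnbIdeal (A :: l) ≤ lnbIdeal (B :: l) := by
  induction l generalizing A B with
  | nil => exact h
  | cons C l ih => exact ih (LieSubmodule.mono_lie_left C h)

theorem lnbIdeal_cons_le (A : LieIdeal R L) {l : List (LieIdeal R L)} (hl : l ≠ []) :
    lnbIdeal (A :: l) ≤ lnbIdeal l := by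
  obtain ⟨B, l, rfl⟩ := List.exists_cons_of_ne_nil hl
  exact lnbIdeal_cons_mono (LieSubmodule.lie_le_right _ _) l

theorem lnbIdeal_cons_le_cons_of_sublist {l' l : List (LieIdeal R L)} (h : l'.Sublist l)
    (A : LieIdeal R L) : lnbIdeal (A :: l) ≤ lnbIdeal (A :: l') := by
  induction h generalizing A with
  | slnil => exact le_rfl
  | cons C _ ih =>
    exact (lnbIdeal_cons_mono (LieSubmodule.lie_le_left _ _) _).trans (ih A)
  | cons_cons C _ ih => exact ih ⁅A, C⁆

theorem lnbIdeal_le_of_sublist {l' l : List (LieIdeal R L)} (h : l'.Sublist l) (hl' : l' ≠ []) :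
    lnbIdeal l ≤ lnbIdeal l' := by
  induction l with
  | nil => exact absurd (List.sublist_nil.mp h) hl'
  | cons C l ih =>
    cases h with
    | cons _ h =>
      have hl : l ≠ [] := fun hl => hl' (List.sublist_nil.mp (hl ▸ h))
      exact (lnbIdeal_cons_le C hl).trans (ih h)
    | cons_cons _ h => exact lnbIdeal_cons_le_cons_of_sublist h C

theorem lnbIdeal_ofFn_equiv_le_symBracketSum {m n : ℕ} (I : Fin n → LieIdeal R L)
    (e : Fin m ≃ Fin n) : lnbIdeal (List.ofFn fun s => I (e s)) ≤ symBracketSum I := by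
  obtain rfl := Fin.equiv_iff_eq.mp ⟨e⟩
  exact le_iSup_of_le e le_rfl

end LeftNormedBracket

/-- **Statement 9.** Let `L` be a Lie algebra over a commutative ring, `I₁, …, I_n` Lie
ideals of `L`, and `(i₁, …, i_p)` a sequence of indices in `{1, …, n}` in which every index
from `1` to `n` occurs.  Then `[[I_{i₁}, I_{i₂}], …, I_{i_p}] ≤ [[I₁, I₂], …, I_n]_S`. -/
theorem lnb_le_symBracketSum {R : Type*} [CommRing R] {L : Type*} [LieRing L]
    [LieAlgebra R L] {n p : ℕ} (I : Fin n → LieIdeal R L) (idx : Fin p → Fin n)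
    (hsurj : Function.Surjective idx) :
    lnbIdeal (List.ofFn (fun s => I (idx s))) ≤ symBracketSum I := by
  classical
  set l := (List.ofFn idx).dedup
  have hcover : ∀ i, i ∈ l := fun i => List.mem_dedup.mpr (List.mem_ofFn.mpr (hsurj i))
  let e := List.Nodup.getEquivOfForallMemList l (List.nodup_dedup _) hcover
  have hl : List.ofFn (fun s => I (e s)) = l.map I :=
    List.map_ofFn.symm.trans (congrArg (List.map I) (List.ofFn_get l))
  rcases eq_or_ne p 0 with rfl | hp
  · exact bot_le
  have hne : l.map I ≠ [] := by simpa [l, List.dedup_eq_nil] using hp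
  calc lnbIdeal (List.ofFn fun s => I (idx s)) = lnbIdeal ((List.ofFn idx).map I) := by
        rw [List.map_ofFn]; rfl
    _ ≤ lnbIdeal (l.map I) := lnbIdeal_le_of_sublist ((List.dedup_sublist _).map I) hne
    _ ≤ symBracketSum I := hl ▸ lnbIdeal_ofFn_equiv_le_symBracketSum I e
end
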